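/- arXiv:1906.00096 — 4 statements merged into one kernel-verified Lean document; each statement's English description precedes it below -/
import Mathlib

section
/- Every admissible Iterated Function System (Γ,p) admits an invariant probability measure μ ∈ M_1(0,1) which is ergodic, i.e., μ is an extreme point of the convex set of invariant probability measures of P: μ cannot be written as tν_1 + (1−t)ν_2 with t ∈ (0,1) and ν_1 ≠ ν_2 both invariant probability measures. -/
open MeasureTheory Set Filter Topology

noncomputable section

/-- The Markov operator of an iterated function system `(g, p)` on `[0,1]`. -/
def markovOp {k : ℕ} (g : Fin k → ℝ → ℝ) (p : Fin k → ℝ) (μ : Measure ℝ) : Measure ℝ :=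
  ∑ i : Fin k, ENNReal.ofReal (p i) • Measure.map (g i) μ

/-- `p` is a probability vector. -/
def ProbVec {k : ℕ} (p : Fin k → ℝ) : Prop :=
  (∀ i, 0 ≤ p i) ∧ ∑ i : Fin k, p i = 1

/-- Membership in `M₁(0,1)`: Borel probability measures on `[0,1]` giving full mass
to the open interval `(0,1)`. -/
def MemM1 (μ : Measure ℝ) : Prop :=
  IsProbabilityMeasure μ ∧ μ (Ioo (0 : ℝ) 1) = 1

/-- The set `N_{M,α}`. -/
def Nset (M α : ℝ) : Set (Measure ℝ) :=
  {μ | MemM1 μ ∧ ∀ x ∈ Icc (0 : ℝ) 1,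
    μ (Icc (0 : ℝ) x) ≤ ENNReal.ofReal (M * x ^ α) ∧
    μ (Icc (1 - x) 1) ≤ ENNReal.ofReal (M * x ^ α)}

/-- The class `C⁺_β`: continuous nondecreasing maps of `[0,1]` fixing `0` and `1`,
continuously differentiable on `[0,β]` and `[1-β,1]`. -/
structure CPlus (β : ℝ) (g : ℝ → ℝ) : Prop where
  mapsTo : MapsTo g (Icc (0 : ℝ) 1) (Icc (0 : ℝ) 1)
  contOn : ContinuousOn g (Icc (0 : ℝ) 1)
  mono : MonotoneOn g (Icc (0 : ℝ) 1)
  map_zero : g 0 = 0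
  map_one : g 1 = 1
  c1_left : ContDiffOn ℝ 1 g (Icc (0 : ℝ) β)
  c1_right : ContDiffOn ℝ 1 g (Icc (1 - β) 1)

/-- `g` is a homeomorphism of `[0,1]` (a continuous bijection of the compact
interval; continuity of the inverse is automatic). -/
def IsIccHomeo (g : ℝ → ℝ) : Prop :=
  MapsTo g (Icc (0 : ℝ) 1) (Icc (0 : ℝ) 1) ∧ InjOn g (Icc (0 : ℝ) 1) ∧
    SurjOn g (Icc (0 : ℝ) 1) (Icc (0 : ℝ) 1)

/-- Admissible iterated function system generated by homeomorphisms in `C⁺_β`: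
strictly positive probabilities, maps moving every interior point both down and up,
and positive Lyapunov exponents at the common fixed points `0` and `1`
(the one-sided derivatives there being positive). -/
structure Admissible (β : ℝ) {k : ℕ} (g : Fin k → ℝ → ℝ) (p : Fin k → ℝ) : Prop where
  cplus : ∀ i, CPlus β (g i)
  homeo : ∀ i, IsIccHomeo (g i)
  p_pos : ∀ i, 0 < p i
  p_sum : ∑ i : Fin k, p i = 1
  below : ∀ x ∈ Ioo (0 : ℝ) 1, ∃ i, g i x < x
  above : ∀ x ∈ Ioo (0 : ℝ) 1, ∃ j, x < g j x
  deriv0_pos : ∀ i, 0 < derivWithin (g i) (Icc (0 : ℝ) 1) 0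
  deriv1_pos : ∀ i, 0 < derivWithin (g i) (Icc (0 : ℝ) 1) 1
  lyap0 : 0 < ∑ i : Fin k, p i * Real.log (derivWithin (g i) (Icc (0 : ℝ) 1) 0)
  lyap1 : 0 < ∑ i : Fin k, p i * Real.log (derivWithin (g i) (Icc (0 : ℝ) 1) 1)

/-- Composition of the maps of an IFS along a finite word:
`wordComp g [i_n, …, i_1] = g i_n ∘ ⋯ ∘ g i_1`. -/
def wordComp {k : ℕ} (g : Fin k → ℝ → ℝ) : List (Fin k) → ℝ → ℝ
  | [], x => x
  | i :: w, x => g i (wordComp g w x)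

/-- Composition of the first `n` maps along an infinite word `ω`:
`iterComp g ω n = g (ω (n-1)) ∘ ⋯ ∘ g (ω 0)`. -/
def iterComp {k : ℕ} (g : Fin k → ℝ → ℝ) (ω : ℕ → Fin k) : ℕ → ℝ → ℝ
  | 0 => id
  | n + 1 => g (ω n) ∘ iterComp g ω n

/-- Supremum of `|f|` over a set `K`. -/
def supOn (K : Set ℝ) (f : ℝ → ℝ) : ℝ :=
  sSup ((fun x => |f x|) '' K)

/-- The Fortet–Mourier distance: the Fortet–Mourier norm of `μ - ν`. -/
def FMdist (μ ν : Measure ℝ) : ℝ :=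
  sSup {r | ∃ f : ℝ → ℝ, (∀ x, |f x| ≤ 1) ∧ LipschitzWith 1 f ∧
    r = (∫ x, f x ∂μ) - ∫ x, f x ∂ν}

/-- The distance `d₀` between two iterated function systems. -/
def dzero {k : ℕ} (S T : Fin k → ℝ → ℝ) (p q : Fin k → ℝ) : ℝ :=
  ∑ i : Fin k, (|p i - q i| + supOn (Icc (0 : ℝ) 1) (fun x => S i x - T i x))

/-- `g` is absolutely continuous on `[0,1]`. -/
def AbsCont (g : ℝ → ℝ) : Prop :=
  ∀ ε > 0, ∃ δ > 0, ∀ n : ℕ, ∀ a b : Fin n → ℝ,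
    (∀ i, 0 ≤ a i ∧ a i ≤ b i ∧ b i ≤ 1) →
    (Pairwise fun i j => Disjoint (Ioo (a i) (b i)) (Ioo (a j) (b j))) →
    ∑ i, (b i - a i) < δ → ∑ i, |g (b i) - g (a i)| < ε

/-- Membership in `M₁^ε`: some Borel subset of `[0,1]` of Lebesgue measure `< ε`
carries `μ`-mass `> 1 - ε/2`. -/
def MemM1eps (ε : ℝ) (μ : Measure ℝ) : Prop :=
  ∃ A : Set ℝ, MeasurableSet A ∧ A ⊆ Icc (0 : ℝ) 1 ∧
    volume A < ENNReal.ofReal ε ∧ ENNReal.ofReal (1 - ε / 2) < μ A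

/-- Clamping of a real number to `[0,1]`. -/
def clampI (x : ℝ) : ℝ := max 0 (min 1 x)

/-- A point of the space `F₀`: a `k`-tuple of homeomorphisms of `[0,1]` in `C⁺_β`
(together with their inverses) and a probability vector.  The maps are normalized
outside `[0,1]` by clamping, so that they are determined by their restrictions
to `[0,1]`. -/
structure Sys (β : ℝ) (k : ℕ) where
  g : Fin k → ℝ → ℝ
  ginv : Fin k → ℝ → ℝ
  p : Fin k → ℝ
  prob : ProbVec p
  cplus : ∀ i, CPlus β (g i)
  ginv_mapsTo : ∀ i, MapsTo (ginv i) (Icc (0 : ℝ) 1) (Icc (0 : ℝ) 1)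
  left_inv : ∀ i, ∀ x ∈ Icc (0 : ℝ) 1, ginv i (g i x) = x
  right_inv : ∀ i, ∀ y ∈ Icc (0 : ℝ) 1, g i (ginv i y) = y
  g_clamp : ∀ i x, g i x = g i (clampI x)
  ginv_clamp : ∀ i x, ginv i x = ginv i (clampI x)

/-- The metric `d` on the space of systems. -/
def dSys {β : ℝ} {k : ℕ} (A B : Sys β k) : ℝ :=
  ∑ i : Fin k,
    (|A.p i - B.p i|
      + supOn (Icc (0 : ℝ) 1) (fun x => A.g i x - B.g i x)
      + supOn (Icc (0 : ℝ) 1) (fun x => A.ginv i x - B.ginv i x)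
      + max
          (supOn (Icc (0 : ℝ) β)
            (fun x => derivWithin (A.g i) (Icc (0 : ℝ) β) x -
              derivWithin (B.g i) (Icc (0 : ℝ) β) x))
          (supOn (Icc (1 - β) 1)
            (fun x => derivWithin (A.g i) (Icc (1 - β) 1) x -
              derivWithin (B.g i) (Icc (1 - β) 1) x)))

/-- The set `F`: admissible systems all of whose maps are absolutely continuous. -/
def Fset (β : ℝ) (k : ℕ) : Set (Sys β k) :=
  {A | Admissible β A.g A.p ∧ ∀ i, AbsCont (A.g i)}

/-- Closure of a set of systems with respect to the metric `dSys`. -/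
def closureSys {β : ℝ} {k : ℕ} (S : Set (Sys β k)) : Set (Sys β k) :=
  {A | ∀ ε > 0, ∃ B ∈ S, dSys A B < ε}

/-- `S` is nowhere dense in the subspace `X` (with respect to `dSys`):
every ball centered in `X` contains a point of `X` some ball around which
misses `S ∩ X`. -/
def NowhereDenseIn {β : ℝ} {k : ℕ} (X S : Set (Sys β k)) : Prop :=
  ∀ A ∈ X, ∀ ε > 0, ∃ B ∈ X, dSys A B < ε ∧ ∃ δ > 0, ∀ C ∈ X ∩ S, δ ≤ dSys B C

/-- Cesàro averages `(ν + Pν + ⋯ + P^{n-1}ν)/n` of a measure under the Markov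
operator of an IFS. -/
def cesaro {k : ℕ} (g : Fin k → ℝ → ℝ) (p : Fin k → ℝ) (ν : Measure ℝ) (n : ℕ) :
    Measure ℝ :=
  (n : ENNReal)⁻¹ • ∑ j ∈ Finset.range n, (fun m => markovOp g p m)^[j] ν


/-!
Everything happens on distribution functions. For measures carried by `(0,1)`, the Markov operator
acts on distribution functions as `T F x = ∑ i, p i * F (g i⁻¹ x)`. Positive Lyapunov exponents
give `α > 0` and `ρ < 1` with `∑ i, p i * (g i⁻¹ u) ^ α ≤ ρ * u ^ α` for small `u > 0`, and
symmetrically at `1`. Hence `T` maps the envelope `min 1 (s * M * x ^ α)` below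
`min 1 (max 1 (ρ * s) * M * x ^ α)`, while `max 0 (1 - M * (1 - x) ^ α)` is a subsolution.
The iterates of `T` on `min 1 (M * x ^ α)` decrease to a fixed point `F` above the subsolution;
`F` is the distribution function of an invariant `μ ∈ M₁(0,1)`, and it is the largest fixed
point lying below some envelope. If `μ = t • ν₁ + (1 - t) • ν₂` with `ν₁, ν₂` invariant, then
the distribution function of `ν₁` is a fixed point of `T` bounded by `F / t`, hence below an
envelope, hence below `F`; the same holds for `ν₂`. A convex combination of two functions below
`F` equals `F` only if both equal `F`, so `ν₁ = μ = ν₂`.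
-/

lemma continuousWithinAt_Ici_iInf {ι : Type*} [Nonempty ι] {f : ι → ℝ → ℝ}
    (hcont : ∀ i, Continuous (f i)) (hbdd : ∀ x, BddBelow (range fun i => f i x))
    (hmono : Monotone fun x => ⨅ i, f i x) (x : ℝ) :
    ContinuousWithinAt (fun y => ⨅ i, f i y) (Ici x) x := by
  refine tendsto_order.2 ⟨fun a ha => ?_, fun b hb => ?_⟩
  · filter_upwards [self_mem_nhdsWithin] with y hy using ha.trans_le (hmono hy)
  · obtain ⟨i, hi⟩ := exists_lt_of_ciInf_lt hb
    filter_upwards [nhdsWithin_le_nhds ((hcont i).continuousAt.eventually (eventually_lt_nhds hi))]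
      with y hy using (ciInf_le (hbdd y) i).trans_lt hy

lemma ENNReal.eq_of_le_of_eq_add_mul {a b c s t : ENNReal} (hs : s ≠ 0) (hst : s + t = 1)
    (ha : a ≤ c) (hb : b ≤ c) (hc : c ≠ ⊤) (h : c = s * a + t * b) : a = c := by
  have hs_top : s ≠ ⊤ := ne_top_of_le_ne_top ENNReal.one_ne_top (hst ▸ le_self_add)
  have ht_top : t ≠ ⊤ := ne_top_of_le_ne_top ENNReal.one_ne_top (hst ▸ le_add_self)
  refine ha.eq_of_not_lt fun hlt => h.not_gt ?_
  calc s * a + t * b < s * c + t * c :=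
        ENNReal.add_lt_add_of_lt_of_le (ENNReal.mul_ne_top ht_top (ne_top_of_le_ne_top hc hb))
          (ENNReal.mul_lt_mul_right hs hs_top hlt) (by gcongr)
    _ = c := by rw [← add_mul, hst, one_mul]

lemma eventually_mul_sub_lt_of_lt_deriv_right {f : ℝ → ℝ} {f' c a : ℝ} {s : Set ℝ}
    (hf : HasDerivWithinAt f f' s a) (hs : s ∈ 𝓝[>] a) (hc : c < f') :
    ∀ᶠ y in 𝓝[>] a, c * (y - a) < f y - f a := by
  have h := (hasDerivWithinAt_iff_tendsto_slope' (s := Ioi a) (lt_irrefl a)).1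
    (hf.mono_of_mem_nhdsWithin hs)
  filter_upwards [h.eventually (lt_mem_nhds hc), self_mem_nhdsWithin] with y hy hya
  rwa [slope_def_field, lt_div_iff₀ (sub_pos.2 hya)] at hy

lemma eventually_mul_sub_lt_of_lt_deriv_left {f : ℝ → ℝ} {f' c a : ℝ} {s : Set ℝ}
    (hf : HasDerivWithinAt f f' s a) (hs : s ∈ 𝓝[<] a) (hc : c < f') :
    ∀ᶠ y in 𝓝[<] a, c * (a - y) < f a - f y := by
  have h := (hasDerivWithinAt_iff_tendsto_slope' (s := Iio a) (lt_irrefl a)).1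
    (hf.mono_of_mem_nhdsWithin hs)
  filter_upwards [h.eventually (lt_mem_nhds hc), self_mem_nhdsWithin] with y hy hya
  rw [slope_def_field, lt_div_iff_of_neg (sub_neg.2 hya)] at hy
  linarith

lemma sum_mul_rpow_le {k : ℕ} {p c x : Fin k → ℝ} {u α : ℝ} (hp : ∀ i, 0 ≤ p i)
    (hc : ∀ i, 0 < c i) (hx : ∀ i, 0 ≤ x i) (hxu : ∀ i, c i * x i ≤ u) (hα : 0 ≤ α) :
    ∑ i, p i * x i ^ α ≤ (∑ i, p i * c i ^ (-α)) * u ^ α := by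
  rw [Finset.sum_mul]
  refine Finset.sum_le_sum fun i _ => ?_
  rw [mul_assoc]
  refine mul_le_mul_of_nonneg_left ?_ (hp i)
  have hu : 0 ≤ u := (mul_nonneg (hc i).le (hx i)).trans (hxu i)
  calc x i ^ α ≤ (u / c i) ^ α :=
        Real.rpow_le_rpow (hx i) ((le_div_iff₀' (hc i)).2 (hxu i)) hα
    _ = c i ^ (-α) * u ^ α := by
        rw [Real.div_rpow hu (hc i).le, Real.rpow_neg (hc i).le]
        ring

/-- The `α`-th moment `∑ p i * c i ^ (-α)` equals `1` at `α = 0` and has derivative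
`-∑ p i * log (c i) < 0` there. -/
lemma eventually_sum_mul_rpow_neg_lt_one {k : ℕ} {p c : Fin k → ℝ} (hp : ∑ i, p i = 1)
    (hc : ∀ i, 0 < c i) (hL : 0 < ∑ i, p i * Real.log (c i)) :
    ∀ᶠ α in 𝓝[>] (0 : ℝ), ∑ i, p i * c i ^ (-α) < 1 := by
  have hq : HasDerivAt (fun α : ℝ => -∑ i, p i * c i ^ (-α)) (∑ i, p i * Real.log (c i)) 0 := by
    simpa using (HasDerivAt.fun_sum (u := Finset.univ) fun i _ =>
      ((hasDerivAt_id' (0 : ℝ)).neg.const_rpow (hc i)).const_mul (p i)).fun_neg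
  filter_upwards [eventually_mul_sub_lt_of_lt_deriv_right hq.hasDerivWithinAt univ_mem hL]
    with α hα
  simpa [hp] using hα

lemma exists_lt_sum_mul_log_pos {k : ℕ} {p d : Fin k → ℝ} (hp : ∑ i, p i = 1)
    (hd : ∀ i, 0 < d i) (hL : 0 < ∑ i, p i * Real.log (d i)) :
    ∃ c : Fin k → ℝ, (∀ i, 0 < c i ∧ c i < d i) ∧ 0 < ∑ i, p i * Real.log (c i) := by
  set L := ∑ i, p i * Real.log (d i)
  have hlog : ∀ i, Real.log (Real.exp (-(L / 2)) * d i) = -(L / 2) + Real.log (d i) := fun i => by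
    rw [Real.log_mul (Real.exp_pos _).ne' (hd i).ne', Real.log_exp]
  refine ⟨fun i => Real.exp (-(L / 2)) * d i,
    fun i => ⟨mul_pos (Real.exp_pos _) (hd i),
      mul_lt_of_lt_one_left (hd i) (Real.exp_lt_one_iff.2 (by linarith))⟩, ?_⟩
  simp only [hlog, mul_add, Finset.sum_add_distrib, ← Finset.sum_mul, hp]
  linarith

lemma clampI_mem (x : ℝ) : clampI x ∈ Icc (0 : ℝ) 1 :=
  ⟨le_max_left _ _, max_le zero_le_one (min_le_left _ _)⟩

lemma clampI_of_mem {x : ℝ} (hx : x ∈ Icc (0 : ℝ) 1) : clampI x = x := by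
  simp [clampI, hx.1, hx.2]

lemma clampI_of_nonpos {x : ℝ} (hx : x ≤ 0) : clampI x = 0 := by
  simp [clampI, hx, hx.trans zero_le_one]

lemma clampI_of_one_le {x : ℝ} (hx : 1 ≤ x) : clampI x = 1 := by
  simp [clampI, hx]

lemma clampI_clampI (x : ℝ) : clampI (clampI x) = clampI x :=
  clampI_of_mem (clampI_mem x)

lemma monotone_clampI : Monotone clampI :=
  monotone_const.max (monotone_const.min monotone_id)

lemma continuous_clampI : Continuous clampI :=
  continuous_const.max (continuous_const.min continuous_id)

lemma le_clampI_iff {a x : ℝ} (ha : a ∈ Ioc (0 : ℝ) 1) : a ≤ clampI x ↔ a ≤ x := by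
  rcases le_or_gt x 0 with hx | hx
  · simp only [clampI_of_nonpos hx]
    exact iff_of_false ha.1.not_ge (by linarith [ha.1])
  rcases le_or_gt 1 x with hx1 | hx1
  · simp only [clampI_of_one_le hx1]
    exact iff_of_true ha.2 (ha.2.trans hx1)
  · rw [clampI_of_mem ⟨hx.le, hx1.le⟩]

section MarkovOp

variable {k : ℕ} {g : Fin k → ℝ → ℝ} {p : Fin k → ℝ}

lemma markovOp_apply (hmeas : ∀ i, Measurable (g i)) (ν : Measure ℝ) {A : Set ℝ}
    (hA : MeasurableSet A) : markovOp g p ν A = ∑ i, ENNReal.ofReal (p i) * ν (g i ⁻¹' A) := by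
  simp only [markovOp, Measure.coe_finsetSum, Finset.sum_apply, Measure.smul_apply,
    Measure.map_apply (hmeas _) hA, smul_eq_mul]

instance (ν : Measure ℝ) [IsFiniteMeasure ν] : IsFiniteMeasure (markovOp g p ν) :=
  ⟨by simp [markovOp, ENNReal.sum_lt_top, ENNReal.mul_lt_top, measure_lt_top]⟩

lemma markovOp_Iic (hmeas : ∀ i, Measurable (g i)) {G : Fin k → ℝ → ℝ}
    (hG : ∀ i, ∀ y ∈ Ioo (0 : ℝ) 1, ∀ x, g i y ≤ x ↔ y ≤ G i x) {ν : Measure ℝ}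
    (hν : ν (Ioo 0 1)ᶜ = 0) (x : ℝ) :
    markovOp g p ν (Iic x) = ∑ i, ENNReal.ofReal (p i) * ν (Iic (G i x)) := by
  rw [markovOp_apply hmeas ν measurableSet_Iic]
  refine Finset.sum_congr rfl fun i _ => congrArg _ ?_
  rw [← measure_inter_conull hν, ← measure_inter_conull (s := Iic (G i x)) hν]
  congr 1
  ext y
  simp only [mem_inter_iff, mem_preimage, mem_Iic]
  exact and_congr_left fun hy => hG i y hy x

end MarkovOp

/-- The `G i` stand for the inverses of the maps of an IFS on `[0,1]`; the last two fields say
that both endpoints repel on average, in the `α`-th moment. -/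
structure RepellingBranches (k : ℕ) where
  p : Fin k → ℝ
  G : Fin k → ℝ → ℝ
  τ : ℝ
  α : ℝ
  ρ : ℝ
  p_nonneg : ∀ i, 0 ≤ p i
  sum_p : ∑ i, p i = 1
  monotone_G : ∀ i, Monotone (G i)
  continuous_G : ∀ i, Continuous (G i)
  G_of_nonpos : ∀ i x, x ≤ 0 → G i x = 0
  G_of_one_le : ∀ i x, 1 ≤ x → G i x = 1
  τ_pos : 0 < τ
  τ_le_half : τ ≤ 1 / 2
  α_pos : 0 < α
  ρ_lt_one : ρ < 1
  moment_zero_le : ∀ u ∈ Ioc 0 τ, ∑ i, p i * G i u ^ α ≤ ρ * u ^ α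
  moment_one_le : ∀ u ∈ Ioc 0 τ, ∑ i, p i * (1 - G i (1 - u)) ^ α ≤ ρ * u ^ α

namespace RepellingBranches

variable {k : ℕ} (S : RepellingBranches k)

lemma G_mem (i : Fin k) (x : ℝ) : S.G i x ∈ Icc (0 : ℝ) 1 :=
  ⟨(S.G_of_nonpos i _ (min_le_right x 0)).symm.le.trans (S.monotone_G i (min_le_left x 0)),
    (S.monotone_G i (le_max_left x 1)).trans (S.G_of_one_le i _ (le_max_right x 1)).le⟩

lemma G_clampI (i : Fin k) (x : ℝ) : S.G i (clampI x) = S.G i x := by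
  rcases le_or_gt x 0 with hx | hx
  · rw [clampI_of_nonpos hx, S.G_of_nonpos i x hx, S.G_of_nonpos i 0 le_rfl]
  rcases le_or_gt 1 x with hx1 | hx1
  · rw [clampI_of_one_le hx1, S.G_of_one_le i x hx1, S.G_of_one_le i 1 le_rfl]
  · rw [clampI_of_mem ⟨hx.le, hx1.le⟩]

lemma moment_zero_le_of_mem_Icc {u : ℝ} (hu : u ∈ Icc 0 S.τ) :
    ∑ i, S.p i * S.G i u ^ S.α ≤ S.ρ * u ^ S.α := by
  rcases hu.1.eq_or_lt with rfl | hu0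
  · simp [S.G_of_nonpos, Real.zero_rpow S.α_pos.ne']
  · exact S.moment_zero_le u ⟨hu0, hu.2⟩

lemma moment_one_le_of_mem_Icc {u : ℝ} (hu : u ∈ Icc 0 S.τ) :
    ∑ i, S.p i * (1 - S.G i (1 - u)) ^ S.α ≤ S.ρ * u ^ S.α := by
  rcases hu.1.eq_or_lt with rfl | hu0
  · simp [S.G_of_one_le, Real.zero_rpow S.α_pos.ne']
  · exact S.moment_one_le u ⟨hu0, hu.2⟩

lemma ρ_nonneg : 0 ≤ S.ρ := by
  have h := S.moment_zero_le S.τ ⟨S.τ_pos, le_rfl⟩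
  have hsum : 0 ≤ ∑ i, S.p i * S.G i S.τ ^ S.α :=
    Finset.sum_nonneg fun i _ => mul_nonneg (S.p_nonneg i) (Real.rpow_nonneg (S.G_mem i _).1 _)
  exact nonneg_of_mul_nonneg_left (hsum.trans h) (Real.rpow_pos_of_pos S.τ_pos _)

/-- Normalisation making `scale * u ^ α = 1` exactly at `u = τ`. -/
def scale : ℝ := S.τ ^ (-S.α)

lemma scale_pos : 0 < S.scale := Real.rpow_pos_of_pos S.τ_pos _

lemma one_le_scale_mul_rpow {u : ℝ} (hu : S.τ ≤ u) : 1 ≤ S.scale * u ^ S.α :=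
  calc 1 = S.scale * S.τ ^ S.α := by
        rw [scale, ← Real.rpow_add S.τ_pos, neg_add_cancel, Real.rpow_zero]
    _ ≤ S.scale * u ^ S.α :=
        mul_le_mul_of_nonneg_left (Real.rpow_le_rpow S.τ_pos.le hu S.α_pos.le) S.scale_pos.le

/-- The Markov operator seen on distribution functions (see `markovOp_Iic`). -/
def dual (F : ℝ → ℝ) (x : ℝ) : ℝ := ∑ i, S.p i * F (S.G i x)

lemma dual_mono : Monotone S.dual := fun _ _ h _ =>
  Finset.sum_le_sum fun i _ => mul_le_mul_of_nonneg_left (h _) (S.p_nonneg i)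

lemma dual_nonneg {F : ℝ → ℝ} (hF : 0 ≤ F) : 0 ≤ S.dual F := fun _ =>
  Finset.sum_nonneg fun i _ => mul_nonneg (S.p_nonneg i) (hF _)

lemma dual_le_one {F : ℝ → ℝ} (hF : F ≤ 1) : S.dual F ≤ 1 := fun x =>
  calc S.dual F x ≤ ∑ i, S.p i * 1 :=
        Finset.sum_le_sum fun i _ => mul_le_mul_of_nonneg_left (hF _) (S.p_nonneg i)
    _ = 1 := by simp [S.sum_p]

lemma monotone_dual {F : ℝ → ℝ} (hF : Monotone F) : Monotone (S.dual F) := fun _ _ h =>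
  Finset.sum_le_sum fun i _ =>
    mul_le_mul_of_nonneg_left (hF (S.monotone_G i h)) (S.p_nonneg i)

lemma continuous_dual {F : ℝ → ℝ} (hF : Continuous F) : Continuous (S.dual F) :=
  continuous_finsetSum _ fun i _ => continuous_const.mul (hF.comp (S.continuous_G i))

lemma dual_of_nonpos {F : ℝ → ℝ} (hF : F 0 = 0) {x : ℝ} (hx : x ≤ 0) : S.dual F x = 0 := by
  simp [dual, S.G_of_nonpos _ x hx, hF]

lemma dual_of_one_le {F : ℝ → ℝ} (hF : F 1 = 1) {x : ℝ} (hx : 1 ≤ x) : S.dual F x = 1 := by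
  simp [dual, S.G_of_one_le _ x hx, hF, S.sum_p]

lemma dual_clampI (F : ℝ → ℝ) (x : ℝ) : S.dual F (clampI x) = S.dual F x := by
  simp only [dual, G_clampI]

def upper (s x : ℝ) : ℝ := min 1 (s * S.scale * clampI x ^ S.α)

def lower (x : ℝ) : ℝ := max 0 (1 - S.scale * (1 - clampI x) ^ S.α)

lemma upper_clampI (s x : ℝ) : S.upper s (clampI x) = S.upper s x := by
  simp only [upper, clampI_clampI]

lemma lower_clampI (x : ℝ) : S.lower (clampI x) = S.lower x := by
  simp only [lower, clampI_clampI]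

lemma upper_nonneg {s : ℝ} (hs : 0 ≤ s) : 0 ≤ S.upper s := fun x =>
  le_min zero_le_one
    (mul_nonneg (mul_nonneg hs S.scale_pos.le) (Real.rpow_nonneg (clampI_mem x).1 _))

lemma upper_le_one (s : ℝ) : S.upper s ≤ 1 := fun _ => min_le_left _ _

lemma upper_eq_one {s x : ℝ} (hs : 1 ≤ s) (hx : S.τ ≤ clampI x) : S.upper s x = 1 := by
  refine min_eq_left ?_
  calc (1 : ℝ) ≤ S.scale * clampI x ^ S.α := S.one_le_scale_mul_rpow hx
    _ ≤ s * S.scale * clampI x ^ S.α := by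
      rw [mul_assoc]
      exact le_mul_of_one_le_left
        (mul_nonneg S.scale_pos.le (Real.rpow_nonneg (clampI_mem x).1 _)) hs

lemma monotone_upper {s : ℝ} (hs : 0 ≤ s) : Monotone (S.upper s) := fun _ _ h =>
  min_le_min le_rfl <| mul_le_mul_of_nonneg_left
    (Real.rpow_le_rpow (clampI_mem _).1 (monotone_clampI h) S.α_pos.le)
    (mul_nonneg hs S.scale_pos.le)

lemma continuous_upper (s : ℝ) : Continuous (S.upper s) :=
  continuous_const.min <| continuous_const.mul <|
    (Real.continuous_rpow_const S.α_pos.le).comp continuous_clampI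

lemma upper_of_nonpos (s : ℝ) {x : ℝ} (hx : x ≤ 0) : S.upper s x = 0 := by
  simp [upper, clampI_of_nonpos hx, Real.zero_rpow S.α_pos.ne']

lemma lower_nonneg : 0 ≤ S.lower := fun _ => le_max_left _ _

lemma lower_eq_zero {x : ℝ} (hx : S.τ ≤ 1 - clampI x) : S.lower x = 0 :=
  max_eq_left (by linarith [S.one_le_scale_mul_rpow hx])

lemma lower_of_one_le {x : ℝ} (hx : 1 ≤ x) : S.lower x = 1 := by
  simp [lower, clampI_of_one_le hx, Real.zero_rpow S.α_pos.ne']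

lemma continuous_lower : Continuous S.lower :=
  continuous_const.max <| continuous_const.sub <| continuous_const.mul <|
    (Real.continuous_rpow_const S.α_pos.le).comp (continuous_const.sub continuous_clampI)

lemma lower_le_upper_one : S.lower ≤ S.upper 1 := by
  intro x
  rcases le_total S.τ (clampI x) with hx | hx
  · rw [S.upper_eq_one le_rfl hx]
    have h := mul_nonneg S.scale_pos.le (Real.rpow_nonneg (sub_nonneg.2 (clampI_mem x).2) S.α)
    exact max_le zero_le_one (by linarith)
  · rw [S.lower_eq_zero (by linarith [S.τ_le_half])]
    exact S.upper_nonneg zero_le_one x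

lemma dual_upper_le {s : ℝ} (hs : 1 ≤ s) : S.dual (S.upper s) ≤ S.upper (max 1 (S.ρ * s)) := by
  intro x
  rw [← S.dual_clampI, ← S.upper_clampI]
  set u := clampI x
  have hu := clampI_mem x
  rcases le_total S.τ u with hτu | huτ
  · rw [S.upper_eq_one (le_max_left _ _) (by rwa [clampI_of_mem hu])]
    exact S.dual_le_one (S.upper_le_one s) u
  refine le_min (S.dual_le_one (S.upper_le_one s) u) ?_
  rw [clampI_of_mem hu]
  calc S.dual (S.upper s) u ≤ ∑ i, S.p i * (s * S.scale * S.G i u ^ S.α) := by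
        refine Finset.sum_le_sum fun i _ => mul_le_mul_of_nonneg_left ?_ (S.p_nonneg i)
        rw [upper, clampI_of_mem (S.G_mem i u)]
        exact min_le_right _ _
    _ = s * S.scale * ∑ i, S.p i * S.G i u ^ S.α := by
        rw [Finset.mul_sum]
        exact Finset.sum_congr rfl fun i _ => by ring
    _ ≤ s * S.scale * (S.ρ * u ^ S.α) :=
        mul_le_mul_of_nonneg_left (S.moment_zero_le_of_mem_Icc ⟨hu.1, huτ⟩)
          (mul_nonneg (zero_le_one.trans hs) S.scale_pos.le)
    _ ≤ max 1 (S.ρ * s) * S.scale * u ^ S.α := by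
        have h := mul_le_mul_of_nonneg_right (le_max_right 1 (S.ρ * s))
          (mul_nonneg S.scale_pos.le (Real.rpow_nonneg hu.1 S.α))
        linarith

lemma lower_le_dual_lower : S.lower ≤ S.dual S.lower := by
  intro x
  rw [← S.dual_clampI, ← S.lower_clampI]
  set u := clampI x
  have hu := clampI_mem x
  rcases le_total S.τ (1 - u) with hτu | huτ
  · rw [S.lower_eq_zero (by rwa [clampI_of_mem hu])]
    exact S.dual_nonneg S.lower_nonneg u
  refine max_le (S.dual_nonneg S.lower_nonneg u) ?_
  rw [clampI_of_mem hu]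
  have hmom := S.moment_one_le_of_mem_Icc (u := 1 - u) ⟨by linarith [hu.2], huτ⟩
  rw [sub_sub_cancel] at hmom
  calc 1 - S.scale * (1 - u) ^ S.α ≤ 1 - S.scale * (S.ρ * (1 - u) ^ S.α) := by
        have h := mul_le_mul_of_nonneg_right S.ρ_lt_one.le
          (mul_nonneg S.scale_pos.le (Real.rpow_nonneg (sub_nonneg.2 hu.2) S.α))
        linarith
    _ ≤ 1 - S.scale * ∑ i, S.p i * (1 - S.G i u) ^ S.α := by
        linarith [mul_le_mul_of_nonneg_left hmom S.scale_pos.le]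
    _ = ∑ i, S.p i * (1 - S.scale * (1 - S.G i u) ^ S.α) := by
        simp only [mul_sub, Finset.sum_sub_distrib, Finset.mul_sum, mul_one, S.sum_p]
        congr 1
        exact Finset.sum_congr rfl fun i _ => by ring
    _ ≤ S.dual S.lower u := by
        refine Finset.sum_le_sum fun i _ => mul_le_mul_of_nonneg_left ?_ (S.p_nonneg i)
        rw [lower, clampI_of_mem (S.G_mem i u)]
        exact le_max_right _ _

def upperIter (n : ℕ) : ℝ → ℝ := S.dual^[n] (S.upper 1)

lemma upperIter_succ (n : ℕ) : S.upperIter (n + 1) = S.dual (S.upperIter n) :=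
  Function.iterate_succ_apply' _ _ _

lemma upperIter_nonneg (n : ℕ) : 0 ≤ S.upperIter n :=
  Function.Iterate.rec (0 ≤ ·) (S.upper_nonneg zero_le_one) (fun _ => S.dual_nonneg) n

lemma monotone_upperIter (n : ℕ) : Monotone (S.upperIter n) :=
  Function.Iterate.rec Monotone (S.monotone_upper zero_le_one) (fun _ => S.monotone_dual) n

lemma continuous_upperIter (n : ℕ) : Continuous (S.upperIter n) :=
  Function.Iterate.rec Continuous (S.continuous_upper 1) (fun _ => S.continuous_dual) n

lemma upperIter_of_nonpos (n : ℕ) {x : ℝ} (hx : x ≤ 0) : S.upperIter n x = 0 :=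
  Function.Iterate.rec (fun F : ℝ → ℝ => ∀ x ≤ 0, F x = 0) (fun _ => S.upper_of_nonpos 1)
    (fun _ hF _ => S.dual_of_nonpos (hF 0 le_rfl)) n x hx

lemma upperIter_of_one_le (n : ℕ) {x : ℝ} (hx : 1 ≤ x) : S.upperIter n x = 1 :=
  Function.Iterate.rec (fun F : ℝ → ℝ => ∀ x, 1 ≤ x → F x = 1)
    (fun _ hx => S.upper_eq_one le_rfl (by rw [clampI_of_one_le hx]; linarith [S.τ_le_half]))
    (fun _ hF _ => S.dual_of_one_le (hF 1 le_rfl)) n x hx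

lemma lower_le_upperIter (n : ℕ) : S.lower ≤ S.upperIter n :=
  Function.Iterate.rec (S.lower ≤ ·) S.lower_le_upper_one
    (fun _ hF => S.lower_le_dual_lower.trans (S.dual_mono hF)) n

lemma antitone_upperIter : Antitone S.upperIter := by
  have h : S.dual (S.upper 1) ≤ S.upper 1 := by
    simpa [max_eq_left S.ρ_lt_one.le] using S.dual_upper_le le_rfl
  refine antitone_nat_of_succ_le fun n => ?_
  rw [upperIter, upperIter, Function.iterate_succ_apply]
  exact S.dual_mono.iterate n h

/-- The largest fixed point of `dual` below some `upper s` (see `le_maxFixed`). -/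
def maxFixed (x : ℝ) : ℝ := ⨅ n, S.upperIter n x

lemma bddBelow_upperIter (x : ℝ) : BddBelow (range fun n => S.upperIter n x) :=
  ⟨0, by rintro _ ⟨n, rfl⟩; exact S.upperIter_nonneg n x⟩

lemma maxFixed_le_upperIter (n : ℕ) (x : ℝ) : S.maxFixed x ≤ S.upperIter n x :=
  ciInf_le (S.bddBelow_upperIter x) n

lemma lower_le_maxFixed : S.lower ≤ S.maxFixed := fun x =>
  le_ciInf fun n => S.lower_le_upperIter n x

lemma maxFixed_nonneg : 0 ≤ S.maxFixed := S.lower_nonneg.trans S.lower_le_maxFixed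

lemma monotone_maxFixed : Monotone S.maxFixed := fun x _ h =>
  le_ciInf fun n => (S.maxFixed_le_upperIter n x).trans (S.monotone_upperIter n h)

lemma maxFixed_of_nonpos {x : ℝ} (hx : x ≤ 0) : S.maxFixed x = 0 :=
  le_antisymm ((S.maxFixed_le_upperIter 0 x).trans_eq (S.upperIter_of_nonpos 0 hx))
    (S.maxFixed_nonneg x)

lemma maxFixed_of_one_le {x : ℝ} (hx : 1 ≤ x) : S.maxFixed x = 1 := by
  simp [maxFixed, S.upperIter_of_one_le _ hx]

lemma tendsto_upperIter (x : ℝ) :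
    Tendsto (fun n => S.upperIter n x) atTop (𝓝 (S.maxFixed x)) :=
  tendsto_atTop_ciInf (fun _ _ h => S.antitone_upperIter h x) (S.bddBelow_upperIter x)

lemma dual_maxFixed : S.dual S.maxFixed = S.maxFixed := by
  funext x
  refine tendsto_nhds_unique ?_ ((S.tendsto_upperIter x).comp (tendsto_add_atTop_nat 1))
  simp only [Function.comp_def, upperIter_succ, dual]
  exact tendsto_finsetSum _ fun i _ => tendsto_const_nhds.mul (S.tendsto_upperIter _)

lemma le_upper_one_of_dual_eq {H : ℝ → ℝ} (hH : S.dual H = H) {s : ℝ} (hs : 1 ≤ s)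
    (hHs : H ≤ S.upper s) : H ≤ S.upper 1 := by
  have key : ∀ n : ℕ, H ≤ S.upper (max 1 (S.ρ ^ n * s)) := by
    intro n
    induction n with
    | zero => simpa [max_eq_right hs] using hHs
    | succ n ih =>
      have h : max 1 (S.ρ * max 1 (S.ρ ^ n * s)) = max 1 (S.ρ ^ (n + 1) * s) := by
        rw [mul_max_of_nonneg _ _ S.ρ_nonneg, ← max_assoc, mul_one, max_eq_left S.ρ_lt_one.le,
          pow_succ', mul_assoc]
      calc H = S.dual H := hH.symm
        _ ≤ S.dual (S.upper (max 1 (S.ρ ^ n * s))) := S.dual_mono ih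
        _ ≤ S.upper (max 1 (S.ρ ^ (n + 1) * s)) := h ▸ S.dual_upper_le (le_max_left _ _)
  have hs0 : 0 < s := zero_lt_one.trans_le hs
  obtain ⟨n, hn⟩ := exists_pow_lt_of_lt_one (inv_pos.2 hs0) S.ρ_lt_one
  have hn' : S.ρ ^ n * s ≤ 1 := by
    simpa [inv_mul_cancel₀ hs0.ne'] using (mul_lt_mul_of_pos_right hn hs0).le
  simpa [max_eq_left hn'] using key n

lemma le_maxFixed {H : ℝ → ℝ} (hH : S.dual H = H) {s : ℝ} (hs : 1 ≤ s)
    (hHs : H ≤ S.upper s) : H ≤ S.maxFixed := by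
  have h : ∀ n, H ≤ S.upperIter n := fun n =>
    Function.Iterate.rec (H ≤ ·) (S.le_upper_one_of_dual_eq hH hs hHs)
      (fun _ hF => hH.ge.trans (S.dual_mono hF)) n
  exact fun x => le_ciInf fun n => h n x

def stieltjes : StieltjesFunction ℝ :=
  ⟨S.maxFixed, S.monotone_maxFixed,
    continuousWithinAt_Ici_iInf S.continuous_upperIter S.bddBelow_upperIter S.monotone_maxFixed⟩

def measure : Measure ℝ := S.stieltjes.measure

lemma tendsto_maxFixed_atBot : Tendsto S.maxFixed atBot (𝓝 0) :=
  tendsto_const_nhds.congr' <|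
    (eventually_le_atBot 0).mono fun _ hx => (S.maxFixed_of_nonpos hx).symm

lemma tendsto_maxFixed_atTop : Tendsto S.maxFixed atTop (𝓝 1) :=
  tendsto_const_nhds.congr' <|
    (eventually_ge_atTop 1).mono fun _ hx => (S.maxFixed_of_one_le hx).symm

lemma measure_Iic (x : ℝ) : S.measure (Iic x) = ENNReal.ofReal (S.maxFixed x) := by
  rw [measure, S.stieltjes.measure_Iic S.tendsto_maxFixed_atBot, sub_zero]
  rfl

instance : IsProbabilityMeasure S.measure :=
  ⟨by simp [measure, S.stieltjes.measure_univ S.tendsto_maxFixed_atBot S.tendsto_maxFixed_atTop]⟩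

lemma leftLim_maxFixed_one : Function.leftLim S.maxFixed 1 = 1 := by
  refine le_antisymm ?_ ?_
  · simpa [S.maxFixed_of_one_le le_rfl] using S.monotone_maxFixed.leftLim_le (le_refl (1 : ℝ))
  · have hlower : Tendsto S.lower (𝓝[<] 1) (𝓝 1) := by
      simpa [ContinuousWithinAt, S.lower_of_one_le le_rfl] using
        S.continuous_lower.continuousWithinAt (s := Iio 1) (x := 1)
    refine le_of_tendsto hlower ?_
    filter_upwards [self_mem_nhdsWithin] with y hy
    exact (S.lower_le_maxFixed y).trans (S.monotone_maxFixed.le_leftLim hy)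

lemma measure_Ioo : S.measure (Ioo 0 1) = 1 := by
  rw [measure, S.stieltjes.measure_Ioo]
  change ENNReal.ofReal (Function.leftLim S.maxFixed 1 - S.maxFixed 0) = 1
  simp [S.leftLim_maxFixed_one, S.maxFixed_of_nonpos le_rfl]

lemma measure_compl_Ioo : S.measure (Ioo 0 1)ᶜ = 0 :=
  (prob_compl_eq_zero_iff measurableSet_Ioo).2 S.measure_Ioo

variable {g : Fin k → ℝ → ℝ}

lemma dual_cdf_of_invariant (hmeas : ∀ i, Measurable (g i))
    (hG : ∀ i, ∀ y ∈ Ioo (0 : ℝ) 1, ∀ x, g i y ≤ x ↔ y ≤ S.G i x) {ν : Measure ℝ}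
    [IsFiniteMeasure ν] (hν : ν (Ioo 0 1)ᶜ = 0) (hinv : markovOp g S.p ν = ν) :
    S.dual (fun x => (ν (Iic x)).toReal) = fun x => (ν (Iic x)).toReal := by
  funext x
  conv_rhs => rw [← hinv, markovOp_Iic hmeas hG hν]
  rw [ENNReal.toReal_sum fun i _ => ENNReal.mul_ne_top ENNReal.ofReal_ne_top (measure_ne_top _ _)]
  simp only [dual, ENNReal.toReal_mul, ENNReal.toReal_ofReal (S.p_nonneg _)]

lemma markovOp_measure (hmeas : ∀ i, Measurable (g i))
    (hG : ∀ i, ∀ y ∈ Ioo (0 : ℝ) 1, ∀ x, g i y ≤ x ↔ y ≤ S.G i x) :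
    markovOp g S.p S.measure = S.measure := by
  refine Measure.ext_of_Iic _ _ fun x => ?_
  rw [markovOp_Iic hmeas hG S.measure_compl_Ioo, S.measure_Iic, ← S.dual_maxFixed, dual,
    ENNReal.ofReal_sum_of_nonneg fun i _ => mul_nonneg (S.p_nonneg i) (S.maxFixed_nonneg _)]
  simp only [S.measure_Iic, ENNReal.ofReal_mul (S.p_nonneg _)]

lemma le_upper_of_mul_le_maxFixed {F : ℝ → ℝ} (hF : F ≤ 1) {t : ℝ} (ht : 0 < t)
    (htF : ∀ x, t * F x ≤ S.maxFixed x) : F ≤ S.upper (max 1 t⁻¹) := by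
  intro x
  have hpow : 0 ≤ S.scale * clampI x ^ S.α :=
    mul_nonneg S.scale_pos.le (Real.rpow_nonneg (clampI_mem x).1 _)
  refine le_min (hF x) ?_
  calc F x ≤ t⁻¹ * S.maxFixed x := by rw [le_inv_mul_iff₀ ht]; exact htF x
    _ ≤ t⁻¹ * (S.scale * clampI x ^ S.α) := by
        gcongr
        simpa [upper, mul_assoc] using (S.maxFixed_le_upperIter 0 x).trans (min_le_right _ _)
    _ ≤ max 1 t⁻¹ * S.scale * clampI x ^ S.α := by
        rw [mul_assoc]
        exact mul_le_mul_of_nonneg_right (le_max_right _ _) hpow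

/-- `t • ν ≤ S.measure` bounds the distribution function of `ν` by `upper (max 1 t⁻¹)`, so the
maximality of `maxFixed` applies. -/
lemma measure_Iic_le_of_smul_le (hmeas : ∀ i, Measurable (g i))
    (hG : ∀ i, ∀ y ∈ Ioo (0 : ℝ) 1, ∀ x, g i y ≤ x ↔ y ≤ S.G i x) {ν : Measure ℝ}
    [IsProbabilityMeasure ν] (hinv : markovOp g S.p ν = ν) {t : ℝ} (ht : 0 < t)
    (hle : ENNReal.ofReal t • ν ≤ S.measure) (x : ℝ) : ν (Iic x) ≤ S.measure (Iic x) := by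
  have hν : ν (Ioo 0 1)ᶜ = 0 := by
    have h := hle (Ioo 0 1)ᶜ
    rw [S.measure_compl_Ioo, Measure.smul_apply, smul_eq_mul, nonpos_iff_eq_zero,
      mul_eq_zero] at h
    exact h.resolve_left (by simpa using ht)
  have htF : ∀ x, t * (ν (Iic x)).toReal ≤ S.maxFixed x := fun x => by
    have h := ENNReal.toReal_mono ENNReal.ofReal_ne_top ((hle (Iic x)).trans_eq (S.measure_Iic x))
    rwa [Measure.smul_apply, smul_eq_mul, ENNReal.toReal_mul, ENNReal.toReal_ofReal ht.le,
      ENNReal.toReal_ofReal (S.maxFixed_nonneg x)] at h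
  have hF1 : (fun x => (ν (Iic x)).toReal) ≤ 1 := fun x => by
    simpa using ENNReal.toReal_mono ENNReal.one_ne_top prob_le_one
  have hF := S.le_maxFixed (S.dual_cdf_of_invariant hmeas hG hν hinv) (le_max_left _ _)
    (S.le_upper_of_mul_le_maxFixed hF1 ht htF)
  rw [S.measure_Iic]
  exact (ENNReal.le_ofReal_iff_toReal_le (measure_ne_top _ _) (S.maxFixed_nonneg x)).2 (hF x)

lemma eq_measure_of_eq_smul_add_smul (hmeas : ∀ i, Measurable (g i))
    (hG : ∀ i, ∀ y ∈ Ioo (0 : ℝ) 1, ∀ x, g i y ≤ x ↔ y ≤ S.G i x) {ν₁ ν₂ : Measure ℝ}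
    [IsProbabilityMeasure ν₁] [IsProbabilityMeasure ν₂] (hinv₁ : markovOp g S.p ν₁ = ν₁)
    (hinv₂ : markovOp g S.p ν₂ = ν₂) {t : ℝ} (ht : t ∈ Ioo (0 : ℝ) 1)
    (h : S.measure = ENNReal.ofReal t • ν₁ + ENNReal.ofReal (1 - t) • ν₂) :
    ν₁ = S.measure := by
  have hle₁ := S.measure_Iic_le_of_smul_le hmeas hG hinv₁ ht.1 (h ▸ Measure.le_add_right le_rfl)
  have hle₂ := S.measure_Iic_le_of_smul_le hmeas hG hinv₂ (sub_pos.2 ht.2)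
    (h ▸ Measure.le_add_left le_rfl)
  have hst : ENNReal.ofReal t + ENNReal.ofReal (1 - t) = 1 := by
    rw [← ENNReal.ofReal_add ht.1.le (sub_nonneg.2 ht.2.le), add_sub_cancel, ENNReal.ofReal_one]
  refine Measure.ext_of_Iic _ _ fun x =>
    ENNReal.eq_of_le_of_eq_add_mul (by simpa using ht.1) hst (hle₁ x) (hle₂ x)
      (measure_ne_top _ _) ?_
  conv_lhs => rw [h]
  rfl

end RepellingBranches

def invBranch (g : ℝ → ℝ) (x : ℝ) : ℝ := Function.invFunOn g (Icc 0 1) (clampI x)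

section InvBranch

variable {β : ℝ} {g : ℝ → ℝ}

lemma invBranch_mem (hh : IsIccHomeo g) (x : ℝ) : invBranch g x ∈ Icc (0 : ℝ) 1 :=
  Function.invFunOn_mem (hh.2.2 (clampI_mem x))

lemma apply_invBranch (hh : IsIccHomeo g) (x : ℝ) : g (invBranch g x) = clampI x :=
  Function.invFunOn_eq (hh.2.2 (clampI_mem x))

lemma invBranch_apply (hh : IsIccHomeo g) {y : ℝ} (hy : y ∈ Icc (0 : ℝ) 1) :
    invBranch g (g y) = y :=
  hh.2.1 (invBranch_mem hh _) hy (by rw [apply_invBranch hh, clampI_of_mem (hh.1 hy)])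

lemma CPlus.strictMonoOn (hg : CPlus β g) (hh : IsIccHomeo g) : StrictMonoOn g (Icc 0 1) :=
  hg.mono.strictMonoOn_of_injOn hh.2.1

lemma monotone_invBranch (hg : CPlus β g) (hh : IsIccHomeo g) : Monotone (invBranch g) :=
  fun x y hxy => ((hg.strictMonoOn hh).le_iff_le (invBranch_mem hh x) (invBranch_mem hh y)).1 <| by
    rw [apply_invBranch hh, apply_invBranch hh]
    exact monotone_clampI hxy

lemma continuous_invBranch (hg : CPlus β g) (hh : IsIccHomeo g) : Continuous (invBranch g) := by
  let G : ℝ → Icc (0 : ℝ) 1 := fun x => ⟨invBranch g x, invBranch_mem hh x⟩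
  have hG : Continuous G := Monotone.continuous_of_surjective
    (fun _ _ h => monotone_invBranch hg hh h) fun y => ⟨g y, Subtype.ext (invBranch_apply hh y.2)⟩
  exact continuous_subtype_val.comp hG

lemma invBranch_of_nonpos (hg : CPlus β g) (hh : IsIccHomeo g) {x : ℝ} (hx : x ≤ 0) :
    invBranch g x = 0 := by
  rw [← invBranch_apply hh (left_mem_Icc.2 zero_le_one), invBranch, invBranch, hg.map_zero,
    clampI_of_nonpos hx, clampI_of_nonpos le_rfl]

lemma invBranch_of_one_le (hg : CPlus β g) (hh : IsIccHomeo g) {x : ℝ} (hx : 1 ≤ x) :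
    invBranch g x = 1 := by
  rw [← invBranch_apply hh (right_mem_Icc.2 zero_le_one), invBranch, invBranch, hg.map_one,
    clampI_of_one_le hx, clampI_of_one_le le_rfl]

lemma invBranch_pos (hg : CPlus β g) (hh : IsIccHomeo g) {x : ℝ} (hx : 0 < x) :
    0 < invBranch g x := by
  refine (invBranch_mem hh x).1.lt_of_ne fun h => ?_
  have h' := apply_invBranch hh x
  rw [← h, hg.map_zero] at h'
  exact (lt_max_of_lt_right (lt_min one_pos hx)).ne h'

lemma invBranch_lt_one (hg : CPlus β g) (hh : IsIccHomeo g) {x : ℝ} (hx : x < 1) :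
    invBranch g x < 1 := by
  refine (invBranch_mem hh x).2.lt_of_ne fun h => ?_
  have h' := apply_invBranch hh x
  rw [h, hg.map_one] at h'
  exact (max_lt zero_lt_one (min_lt_of_right_lt hx)).ne' h'

lemma apply_le_iff_le_invBranch (hg : CPlus β g) (hh : IsIccHomeo g) {y : ℝ}
    (hy : y ∈ Ioo (0 : ℝ) 1) (x : ℝ) : g y ≤ x ↔ y ≤ invBranch g x := by
  have hy' : y ∈ Icc (0 : ℝ) 1 := Ioo_subset_Icc_self hy
  have hgy : g y ∈ Ioc (0 : ℝ) 1 :=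
    ⟨hg.map_zero ▸ hg.strictMonoOn hh (left_mem_Icc.2 zero_le_one) hy' hy.1, (hg.mapsTo hy').2⟩
  rw [← le_clampI_iff hgy, ← apply_invBranch hh x]
  exact (hg.strictMonoOn hh).le_iff_le hy' (invBranch_mem hh x)

lemma CPlus.hasDerivWithinAt_zero (hg : CPlus β g) (hβ : 0 < β) :
    HasDerivWithinAt g (derivWithin g (Icc 0 1) 0) (Icc 0 1) 0 :=
  ((hg.c1_left.differentiableOn one_ne_zero 0 ⟨le_rfl, hβ.le⟩).mono_of_mem_nhdsWithin
    (nhdsWithin_mono _ Icc_subset_Ici_self (Icc_mem_nhdsGE hβ))).hasDerivWithinAt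

lemma CPlus.hasDerivWithinAt_one (hg : CPlus β g) (hβ : 0 < β) :
    HasDerivWithinAt g (derivWithin g (Icc 0 1) 1) (Icc 0 1) 1 :=
  ((hg.c1_right.differentiableOn one_ne_zero 1 ⟨by linarith, le_rfl⟩).mono_of_mem_nhdsWithin
    (nhdsWithin_mono _ Icc_subset_Iic_self (Icc_mem_nhdsLE (by linarith)))).hasDerivWithinAt

lemma eventually_mul_invBranch_le (hg : CPlus β g) (hh : IsIccHomeo g) (hβ : 0 < β) {c : ℝ}
    (hc : c < derivWithin g (Icc 0 1) 0) : ∀ᶠ u in 𝓝[>] 0, c * invBranch g u ≤ u := by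
  have hslope := eventually_mul_sub_lt_of_lt_deriv_right (hg.hasDerivWithinAt_zero hβ)
    (mem_of_superset (Ioo_mem_nhdsGT zero_lt_one) Ioo_subset_Icc_self) hc
  have hG : Tendsto (invBranch g) (𝓝[>] 0) (𝓝[>] 0) :=
    tendsto_nhdsWithin_of_tendsto_nhds_of_eventually_within _
      (((continuous_invBranch hg hh).tendsto' 0 0 (invBranch_of_nonpos hg hh le_rfl)).mono_left
        nhdsWithin_le_nhds)
      (eventually_nhdsWithin_of_forall fun _ hx => invBranch_pos hg hh hx)
  filter_upwards [hG.eventually hslope, Ioo_mem_nhdsGT zero_lt_one] with u hu hu1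
  rw [hg.map_zero, sub_zero, sub_zero, apply_invBranch hh, clampI_of_mem ⟨hu1.1.le, hu1.2.le⟩]
    at hu
  exact hu.le

lemma eventually_mul_one_sub_invBranch_le (hg : CPlus β g) (hh : IsIccHomeo g) (hβ : 0 < β)
    {c : ℝ} (hc : c < derivWithin g (Icc 0 1) 1) :
    ∀ᶠ u in 𝓝[>] 0, c * (1 - invBranch g (1 - u)) ≤ u := by
  have hslope := eventually_mul_sub_lt_of_lt_deriv_left (hg.hasDerivWithinAt_one hβ)
    (mem_of_superset (Ioo_mem_nhdsLT zero_lt_one) Ioo_subset_Icc_self) hc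
  have hcont : Continuous fun u => invBranch g (1 - u) :=
    (continuous_invBranch hg hh).comp (continuous_const.sub continuous_id)
  have hG : Tendsto (fun u => invBranch g (1 - u)) (𝓝[>] 0) (𝓝[<] 1) :=
    tendsto_nhdsWithin_of_tendsto_nhds_of_eventually_within _
      ((hcont.tendsto' 0 1 (by rw [sub_zero, invBranch_of_one_le hg hh le_rfl])).mono_left
        nhdsWithin_le_nhds)
      (eventually_nhdsWithin_of_forall fun _ hx =>
        invBranch_lt_one hg hh (sub_lt_self 1 (mem_Ioi.1 hx)))
  filter_upwards [hG.eventually hslope, Ioo_mem_nhdsGT zero_lt_one] with u hu hu1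
  rw [hg.map_one, apply_invBranch hh, clampI_of_mem ⟨by linarith [hu1.2], by linarith [hu1.1]⟩,
    sub_sub_cancel] at hu
  exact hu.le

end InvBranch

section Admissible

variable {β : ℝ} {k : ℕ} {g : Fin k → ℝ → ℝ} {p : Fin k → ℝ}

lemma Admissible.eventually_moment_zero_le (hadm : Admissible β g p) (hβ : 0 < β)
    {c : Fin k → ℝ} (hc : ∀ i, 0 < c i ∧ c i < derivWithin (g i) (Icc 0 1) 0) {α : ℝ}
    (hα : 0 ≤ α) :
    ∀ᶠ u in 𝓝[>] 0, ∑ i, p i * invBranch (g i) u ^ α ≤ (∑ i, p i * c i ^ (-α)) * u ^ α := by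
  filter_upwards [eventually_all.2 fun i =>
    eventually_mul_invBranch_le (hadm.cplus i) (hadm.homeo i) hβ (hc i).2] with u hu
  exact sum_mul_rpow_le (fun i => (hadm.p_pos i).le) (fun i => (hc i).1)
    (fun i => (invBranch_mem (hadm.homeo i) u).1) hu hα

lemma Admissible.eventually_moment_one_le (hadm : Admissible β g p) (hβ : 0 < β)
    {c : Fin k → ℝ} (hc : ∀ i, 0 < c i ∧ c i < derivWithin (g i) (Icc 0 1) 1) {α : ℝ}
    (hα : 0 ≤ α) :
    ∀ᶠ u in 𝓝[>] 0,
      ∑ i, p i * (1 - invBranch (g i) (1 - u)) ^ α ≤ (∑ i, p i * c i ^ (-α)) * u ^ α := by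
  filter_upwards [eventually_all.2 fun i =>
    eventually_mul_one_sub_invBranch_le (hadm.cplus i) (hadm.homeo i) hβ (hc i).2] with u hu
  exact sum_mul_rpow_le (fun i => (hadm.p_pos i).le) (fun i => (hc i).1)
    (fun i => sub_nonneg.2 (invBranch_mem (hadm.homeo i) _).2) hu hα

lemma Admissible.exists_repellingBranches (hadm : Admissible β g p) (hβ : 0 < β) :
    ∃ S : RepellingBranches k, S.p = p ∧
      ∀ i, ∀ y ∈ Ioo (0 : ℝ) 1, ∀ x, g i y ≤ x ↔ y ≤ S.G i x := by
  obtain ⟨c₀, hc₀, hL₀⟩ := exists_lt_sum_mul_log_pos hadm.p_sum hadm.deriv0_pos hadm.lyap0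
  obtain ⟨c₁, hc₁, hL₁⟩ := exists_lt_sum_mul_log_pos hadm.p_sum hadm.deriv1_pos hadm.lyap1
  obtain ⟨α, ⟨hρ₀, hρ₁⟩, hα⟩ :=
    (((eventually_sum_mul_rpow_neg_lt_one hadm.p_sum (fun i => (hc₀ i).1) hL₀).and
      (eventually_sum_mul_rpow_neg_lt_one hadm.p_sum (fun i => (hc₁ i).1) hL₁)).and
        self_mem_nhdsWithin).exists
  set ρ := max (∑ i, p i * c₀ i ^ (-α)) (∑ i, p i * c₁ i ^ (-α))
  have hmoment : ∀ᶠ u in 𝓝[>] 0, ∑ i, p i * invBranch (g i) u ^ α ≤ ρ * u ^ α ∧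
      ∑ i, p i * (1 - invBranch (g i) (1 - u)) ^ α ≤ ρ * u ^ α := by
    filter_upwards [hadm.eventually_moment_zero_le hβ hc₀ hα.le,
      hadm.eventually_moment_one_le hβ hc₁ hα.le, self_mem_nhdsWithin] with u hu₀ hu₁ hu
    have hpow : 0 ≤ u ^ α := Real.rpow_nonneg (le_of_lt hu) _
    exact ⟨hu₀.trans (mul_le_mul_of_nonneg_right (le_max_left _ _) hpow),
      hu₁.trans (mul_le_mul_of_nonneg_right (le_max_right _ _) hpow)⟩
  obtain ⟨τ, hτ, hsub⟩ := mem_nhdsGT_iff_exists_Ioc_subset.1 hmoment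
  refine ⟨
    { p := p
      G := fun i => invBranch (g i)
      τ := min τ (1 / 2)
      α := α
      ρ := ρ
      p_nonneg := fun i => (hadm.p_pos i).le
      sum_p := hadm.p_sum
      monotone_G := fun i => monotone_invBranch (hadm.cplus i) (hadm.homeo i)
      continuous_G := fun i => continuous_invBranch (hadm.cplus i) (hadm.homeo i)
      G_of_nonpos := fun i _ => invBranch_of_nonpos (hadm.cplus i) (hadm.homeo i)
      G_of_one_le := fun i _ => invBranch_of_one_le (hadm.cplus i) (hadm.homeo i)
      τ_pos := lt_min hτ one_half_pos
      τ_le_half := min_le_right _ _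
      α_pos := hα
      ρ_lt_one := max_lt hρ₀ hρ₁
      moment_zero_le := fun u hu => (hsub ⟨hu.1, hu.2.trans (min_le_left _ _)⟩).1
      moment_one_le := fun u hu => (hsub ⟨hu.1, hu.2.trans (min_le_left _ _)⟩).2 },
    rfl, fun i _ hy x => apply_le_iff_le_invBranch (hadm.cplus i) (hadm.homeo i) hy x⟩

end Admissible

/-- Every admissible IFS admits an invariant probability measure
in `M₁(0,1)` which is ergodic, i.e. an extreme point of the convex set of
invariant probability measures of the Markov operator. -/
theorem exists_ergodic_invariant_measure (β : ℝ) (hβ : 0 < β) (k : ℕ)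
    (g : Fin k → ℝ → ℝ) (p : Fin k → ℝ)
    (hmeas : ∀ i, Measurable (g i)) (hadm : Admissible β g p) :
    ∃ μ : Measure ℝ, MemM1 μ ∧ markovOp g p μ = μ ∧
      ∀ t : ℝ, t ∈ Ioo (0 : ℝ) 1 → ∀ ν₁ ν₂ : Measure ℝ,
        IsProbabilityMeasure ν₁ → IsProbabilityMeasure ν₂ →
        markovOp g p ν₁ = ν₁ → markovOp g p ν₂ = ν₂ →
        μ = ENNReal.ofReal t • ν₁ + ENNReal.ofReal (1 - t) • ν₂ → ν₁ = ν₂ := by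
  obtain ⟨S, rfl, hG⟩ := hadm.exists_repellingBranches hβ
  refine ⟨S.measure, ⟨inferInstance, S.measure_Ioo⟩, S.markovOp_measure hmeas hG, ?_⟩
  intro t ht ν₁ ν₂ _ _ hinv₁ hinv₂ h
  have h' : S.measure = ENNReal.ofReal (1 - t) • ν₂ + ENNReal.ofReal (1 - (1 - t)) • ν₁ := by
    rw [sub_sub_cancel, h, add_comm]
  rw [S.eq_measure_of_eq_smul_add_smul hmeas hG hinv₁ hinv₂ ht h,
    S.eq_measure_of_eq_smul_add_smul hmeas hG hinv₂ hinv₁ ⟨sub_pos.2 ht.2, sub_lt_self 1 ht.1⟩ h']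

end
end

section
/- Let (S,p) = ({S_1,…,S_k}, p) and (T,q) = ({T_1,…,T_k}, q) be Iterated Function Systems on [0,1] with continuous maps, and let P_S, P_T be their Markov operators. Then for all finite Borel measures μ_1, μ_2 on [0,1]: ‖P_S(μ_1 − μ_2) − P_T(μ_1 − μ_2)‖_FM ≤ (μ_1([0,1]) + μ_2([0,1])) · d_0((S,p),(T,q)). -/
open MeasureTheory Set Filter Topology

noncomputable section

/-! For a test function `f` of the Fortet–Mourier norm,
`∫ f d(P_S μ) - ∫ f d(P_T μ) = ∑ᵢ (pᵢ ∫ f ∘ Sᵢ dμ - qᵢ ∫ f ∘ Tᵢ dμ)`, and each summand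
splits as `(pᵢ - qᵢ) ∫ f ∘ Sᵢ dμ + qᵢ ∫ (f ∘ Sᵢ - f ∘ Tᵢ) dμ`.
Since `|f| ≤ 1` the first part is at most `|pᵢ - qᵢ| μ[0,1]`; since `f` is `1`-Lipschitz
and `qᵢ ≤ 1` the second is at most `sup |Sᵢ - Tᵢ| μ[0,1]`.
Applying this to `μ₁` and to `μ₂` and adding gives the estimate. -/

lemma ProbVec.le_one {k : ℕ} {p : Fin k → ℝ} (hp : ProbVec p) (i : Fin k) : p i ≤ 1 :=
  hp.2 ▸ Finset.single_le_sum (fun j _ => hp.1 j) (Finset.mem_univ i)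

lemma le_supOn {K : Set ℝ} {f : ℝ → ℝ} (hf : BddAbove ((fun x => |f x|) '' K)) {x : ℝ}
    (hx : x ∈ K) : |f x| ≤ supOn K f :=
  le_csSup hf (mem_image_of_mem _ hx)

lemma abs_sub_le_supOn {K : Set ℝ} {a b : ℝ} {S T : ℝ → ℝ} (hS : MapsTo S K (Icc a b))
    (hT : MapsTo T K (Icc a b)) {x : ℝ} (hx : x ∈ K) :
    |S x - T x| ≤ supOn K (fun y => S y - T y) := by
  refine le_supOn (f := fun y => S y - T y) ⟨b - a, ?_⟩ hx
  rintro _ ⟨y, hy, rfl⟩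
  exact Real.dist_le_of_mem_Icc (hS hy) (hT hy)

lemma abs_mul_sub_mul_le {p q a b : ℝ} (hq : 0 ≤ q) :
    |p * a - q * b| ≤ |p - q| * |a| + q * |a - b| :=
  calc |p * a - q * b| = |(p - q) * a + q * (a - b)| := by ring_nf
    _ ≤ |(p - q) * a| + |q * (a - b)| := abs_add_le _ _
    _ = |p - q| * |a| + q * |a - b| := by rw [abs_mul, abs_mul, abs_of_nonneg hq]

section Integrals

variable {α : Type*} [MeasurableSpace α] {μ : Measure α} [IsFiniteMeasure μ]

lemma integrable_of_abs_le {f : α → ℝ} (hf : Measurable f) {C : ℝ}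
    (hC : ∀ x, |f x| ≤ C) : Integrable f μ :=
  Integrable.of_bound hf.aestronglyMeasurable C (ae_of_all _ hC)

lemma abs_integral_le_of_abs_le_one {f : α → ℝ} (hf : ∀ x, |f x| ≤ 1) :
    |∫ x, f x ∂μ| ≤ μ.real univ := by
  simpa using norm_integral_le_of_norm_le_const (μ := μ) (f := f) (C := 1)
    (ae_of_all _ fun x => by simpa using hf x)

lemma abs_integral_comp_sub_le {f : ℝ → ℝ} {L : NNReal} (hf : LipschitzWith L f)
    {C : ℝ} (hfC : ∀ x, |f x| ≤ C) {S T : α → ℝ} (hS : Measurable S) (hT : Measurable T)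
    {δ : ℝ} (hST : ∀ᵐ x ∂μ, |S x - T x| ≤ δ) :
    |∫ x, f (S x) ∂μ - ∫ x, f (T x) ∂μ| ≤ L * δ * μ.real univ := by
  have hfm := hf.continuous.measurable
  have hint : ∀ {g : α → ℝ}, Measurable g → Integrable (fun x => f (g x)) μ :=
    fun hg => integrable_of_abs_le (hfm.comp hg) fun x => hfC _
  rw [← integral_sub (hint hS) (hint hT), ← Real.norm_eq_abs]
  refine norm_integral_le_of_norm_le_const ?_
  filter_upwards [hST] with x hx
  calc ‖f (S x) - f (T x)‖ ≤ L * |S x - T x| := by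
        simpa [Real.dist_eq] using hf.dist_le_mul (S x) (T x)
    _ ≤ L * δ := by gcongr

end Integrals

instance isFiniteMeasure_markovOp {k : ℕ} (g : Fin k → ℝ → ℝ) (p : Fin k → ℝ)
    (μ : Measure ℝ) [IsFiniteMeasure μ] : IsFiniteMeasure (markovOp g p μ) := by
  refine ⟨?_⟩
  simp only [markovOp, Measure.coe_finsetSum, Finset.sum_apply, Measure.smul_apply, smul_eq_mul]
  exact ENNReal.sum_lt_top.2 fun i _ =>
    ENNReal.mul_lt_top ENNReal.ofReal_lt_top (measure_lt_top _ _)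

lemma integral_markovOp {k : ℕ} {g : Fin k → ℝ → ℝ} (hg : ∀ i, Measurable (g i))
    {p : Fin k → ℝ} (hp : ∀ i, 0 ≤ p i) (μ : Measure ℝ) [IsFiniteMeasure μ]
    {f : ℝ → ℝ} (hf : Measurable f) {C : ℝ} (hC : ∀ x, |f x| ≤ C) :
    ∫ x, f x ∂(markovOp g p μ) = ∑ i, p i * ∫ x, f (g i x) ∂μ := by
  rw [markovOp, integral_finsetSum_measure fun i _ =>
    (integrable_of_abs_le hf hC).smul_measure ENNReal.ofReal_ne_top]
  refine Finset.sum_congr rfl fun i _ => ?_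
  rw [integral_smul_measure, ENNReal.toReal_ofReal (hp i),
    integral_map (hg i).aemeasurable hf.aestronglyMeasurable, smul_eq_mul]

lemma abs_integral_markovOp_sub_le {k : ℕ} {S T : Fin k → ℝ → ℝ} {p q : Fin k → ℝ}
    (hSm : ∀ i, Measurable (S i)) (hSt : ∀ i, MapsTo (S i) (Icc (0 : ℝ) 1) (Icc (0 : ℝ) 1))
    (hTm : ∀ i, Measurable (T i)) (hTt : ∀ i, MapsTo (T i) (Icc (0 : ℝ) 1) (Icc (0 : ℝ) 1))
    (hp : ProbVec p) (hq : ProbVec q) {μ : Measure ℝ} [IsFiniteMeasure μ]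
    (hμ : μ (Icc (0 : ℝ) 1)ᶜ = 0) {f : ℝ → ℝ} (hf1 : ∀ x, |f x| ≤ 1)
    (hf : LipschitzWith 1 f) :
    |∫ x, f x ∂(markovOp S p μ) - ∫ x, f x ∂(markovOp T q μ)|
      ≤ μ.real (Icc (0 : ℝ) 1) * dzero S T p q := by
  have hfm := hf.continuous.measurable
  rw [integral_markovOp hSm hp.1 μ hfm hf1, integral_markovOp hTm hq.1 μ hfm hf1,
    ← Finset.sum_sub_distrib, dzero, Finset.mul_sum, measureReal_def,
    measure_of_measure_compl_eq_zero hμ, ← measureReal_def]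
  refine (Finset.abs_sum_le_sum_abs _ _).trans (Finset.sum_le_sum fun i _ => ?_)
  set s := supOn (Icc (0 : ℝ) 1) (fun x => S i x - T i x)
  set A := ∫ x, f (S i x) ∂μ
  set B := ∫ x, f (T i x) ∂μ
  have hA : |A| ≤ μ.real univ := abs_integral_le_of_abs_le_one fun x => hf1 _
  have hAB : |A - B| ≤ s * μ.real univ := by
    have hδ : ∀ᵐ x ∂μ, |S i x - T i x| ≤ s := by
      filter_upwards [mem_ae_iff.2 hμ] with x hx
      exact abs_sub_le_supOn (hSt i) (hTt i) hx
    simpa using abs_integral_comp_sub_le hf hf1 (hSm i) (hTm i) hδ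
  calc |p i * A - q i * B| ≤ |p i - q i| * |A| + q i * |A - B| := abs_mul_sub_mul_le (hq.1 i)
    _ ≤ |p i - q i| * μ.real univ + 1 * (s * μ.real univ) := by
        gcongr
        exact hq.le_one i
    _ = μ.real univ * (|p i - q i| + s) := by ring

lemma FMdist_le {μ ν : Measure ℝ} {c : ℝ}
    (h : ∀ f : ℝ → ℝ, (∀ x, |f x| ≤ 1) → LipschitzWith 1 f →
      ∫ x, f x ∂μ - ∫ x, f x ∂ν ≤ c) :
    FMdist μ ν ≤ c := by
  refine csSup_le ⟨0, fun _ => 0, by simp, LipschitzWith.const' 0, by simp⟩ ?_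
  rintro _ ⟨f, hf1, hf, rfl⟩
  exact h f hf1 hf

theorem FM_estimate_markov_difference_general (k : ℕ)
    (S T : Fin k → ℝ → ℝ) (p q : Fin k → ℝ)
    (hSm : ∀ i, Measurable (S i))
    (hSt : ∀ i, MapsTo (S i) (Icc (0 : ℝ) 1) (Icc (0 : ℝ) 1))
    (hTm : ∀ i, Measurable (T i))
    (hTt : ∀ i, MapsTo (T i) (Icc (0 : ℝ) 1) (Icc (0 : ℝ) 1))
    (hp : ProbVec p) (hq : ProbVec q)
    (μ₁ μ₂ : Measure ℝ) (h1 : IsFiniteMeasure μ₁) (h2 : IsFiniteMeasure μ₂)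
    (hs1 : μ₁ (Icc (0 : ℝ) 1)ᶜ = 0) (hs2 : μ₂ (Icc (0 : ℝ) 1)ᶜ = 0) :
    FMdist (markovOp S p μ₁ + markovOp T q μ₂) (markovOp T q μ₁ + markovOp S p μ₂)
      ≤ ((μ₁ (Icc (0 : ℝ) 1)).toReal + (μ₂ (Icc (0 : ℝ) 1)).toReal) *
        dzero S T p q := by
  refine FMdist_le fun f hf1 hf => ?_
  have hint : ∀ (ν : Measure ℝ) [IsFiniteMeasure ν], Integrable f ν :=
    fun _ _ => integrable_of_abs_le hf.continuous.measurable hf1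
  have e₁ := abs_le.1 (abs_integral_markovOp_sub_le hSm hSt hTm hTt hp hq hs1 hf1 hf)
  have e₂ := abs_le.1 (abs_integral_markovOp_sub_le hSm hSt hTm hTt hp hq hs2 hf1 hf)
  rw [integral_add_measure (hint _) (hint _), integral_add_measure (hint _) (hint _)]
  simp only [measureReal_def] at e₁ e₂
  linarith [e₁.2, e₂.1]

/-- Fortet–Mourier estimate for the difference of two Markov
operators applied to a difference of finite measures:
`‖(P_S - P_T)(μ₁ - μ₂)‖_FM ≤ (μ₁([0,1]) + μ₂([0,1])) ⬝ d₀((S,p),(T,q))`.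
(The signed measure `(P_S - P_T)(μ₁ - μ₂)` is written as the difference of the
two nonnegative measures `P_S μ₁ + P_T μ₂` and `P_T μ₁ + P_S μ₂`.) -/
theorem FM_estimate_markov_difference (k : ℕ)
    (S T : Fin k → ℝ → ℝ) (p q : Fin k → ℝ)
    (hSm : ∀ i, Measurable (S i)) (hSc : ∀ i, ContinuousOn (S i) (Icc (0 : ℝ) 1))
    (hSt : ∀ i, MapsTo (S i) (Icc (0 : ℝ) 1) (Icc (0 : ℝ) 1))
    (hTm : ∀ i, Measurable (T i)) (hTc : ∀ i, ContinuousOn (T i) (Icc (0 : ℝ) 1))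
    (hTt : ∀ i, MapsTo (T i) (Icc (0 : ℝ) 1) (Icc (0 : ℝ) 1))
    (hp : ProbVec p) (hq : ProbVec q)
    (μ₁ μ₂ : Measure ℝ) (h1 : IsFiniteMeasure μ₁) (h2 : IsFiniteMeasure μ₂)
    (hs1 : μ₁ (Icc (0 : ℝ) 1)ᶜ = 0) (hs2 : μ₂ (Icc (0 : ℝ) 1)ᶜ = 0) :
    FMdist (markovOp S p μ₁ + markovOp T q μ₂) (markovOp T q μ₁ + markovOp S p μ₂)
      ≤ ((μ₁ (Icc (0 : ℝ) 1)).toReal + (μ₂ (Icc (0 : ℝ) 1)).toReal) *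
        dzero S T p q :=
  FM_estimate_markov_difference_general k S T p q hSm hSt hTm hTt hp hq μ₁ μ₂ h1 h2 hs1 hs2

end
end

section
/- If μ is a Borel probability measure on [0,1] that is singular with respect to Lebesgue measure, then for every ε > 0 there exists δ > 0 such that every Borel probability measure ν on [0,1] with ‖μ − ν‖_FM < δ belongs to M_1^ε. -/
open MeasureTheory Set Filter Topology

noncomputable section

/-! A singular `μ` puts all but `ε/4` of its mass on a compact Lebesgue-null set `K`, and a
small open thickening `T = thickening r K` (with `r ≤ 1`) still has Lebesgue measure `< ε`. The
tent function `max 0 (r - infDist x K)` is `1`-Lipschitz, bounded by `r ≤ 1`, equal to `r` on `K`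
and zero off `T`; testing the Fortet–Mourier norm against it gives
`r (μ K - ν T) ≤ ‖μ - ν‖_FM`, so `ν T > 1 - ε/2` as soon as `‖μ - ν‖_FM < r ε / 4`. -/

open Metric

section Cutoff

variable {X : Type*} [PseudoMetricSpace X] {K : Set X} {r : ℝ}

def cutoff (K : Set X) (r : ℝ) (x : X) : ℝ := max 0 (r - infDist x K)

lemma lipschitzWith_cutoff (K : Set X) (r : ℝ) : LipschitzWith 1 (cutoff K r) := by
  show LipschitzWith 1 fun x => max 0 (r - infDist x K)
  simpa using ((LipschitzWith.const r).sub (lipschitz_infDist_pt K)).const_max 0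

lemma cutoff_nonneg (x : X) : 0 ≤ cutoff K r x := le_max_left _ _

lemma cutoff_le (hr : 0 ≤ r) (x : X) : cutoff K r x ≤ r :=
  max_le hr (sub_le_self _ infDist_nonneg)

lemma abs_cutoff_le (hr : 0 ≤ r) (x : X) : |cutoff K r x| ≤ r := by
  rw [abs_of_nonneg (cutoff_nonneg x)]
  exact cutoff_le hr x

lemma indicator_le_cutoff (hr : 0 ≤ r) : K.indicator (fun _ => r) ≤ cutoff K r := by
  intro x
  by_cases hx : x ∈ K
  · simp [hx, cutoff, infDist_zero_of_mem hx, hr]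
  · simp [hx, cutoff_nonneg]

lemma cutoff_le_indicator_thickening (hK : K.Nonempty) (hr : 0 ≤ r) :
    cutoff K r ≤ (thickening r K).indicator (fun _ => r) := by
  intro x
  by_cases hx : x ∈ thickening r K
  · simpa [hx] using cutoff_le hr x
  · have hr_le : r ≤ infDist x K := not_lt.1 <| (mem_thickening_iff_infDist_lt hK).not.1 hx
    rw [indicator_of_notMem hx, cutoff, max_eq_left (sub_nonpos.2 hr_le)]

end Cutoff

lemma le_FMdist (μ ν : Measure ℝ) [IsFiniteMeasure μ] [IsFiniteMeasure ν]
    {f : ℝ → ℝ} (hb : ∀ x, |f x| ≤ 1) (hf : LipschitzWith 1 f) :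
    (∫ x, f x ∂μ) - ∫ x, f x ∂ν ≤ FMdist μ ν := by
  have abs_integral_le (ρ : Measure ℝ) [IsFiniteMeasure ρ] {g : ℝ → ℝ} (hg : ∀ x, |g x| ≤ 1) :
      |∫ x, g x ∂ρ| ≤ ρ.real univ := by
    simpa using norm_integral_le_of_norm_le_const (μ := ρ) (C := 1)
      (.of_forall fun x => (Real.norm_eq_abs _).trans_le (hg x))
  refine le_csSup ⟨μ.real univ + ν.real univ, ?_⟩ ⟨f, hb, hf, rfl⟩
  rintro _ ⟨g, hg, -, rfl⟩
  linarith [abs_le.1 (abs_integral_le μ hg), abs_le.1 (abs_integral_le ν hg)]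

lemma mul_sub_measureReal_thickening_le_FMdist (μ ν : Measure ℝ) [IsFiniteMeasure μ]
    [IsFiniteMeasure ν] {K : Set ℝ} (hK : IsClosed K) {r : ℝ} (hr0 : 0 ≤ r) (hr1 : r ≤ 1) :
    r * (μ.real K - ν.real (thickening r K)) ≤ FMdist μ ν := by
  rcases K.eq_empty_or_nonempty with rfl | hKne
  · simpa using le_FMdist μ ν (f := fun _ => 0) (by simp) (LipschitzWith.const' 0)
  have hint (ρ : Measure ℝ) [IsFiniteMeasure ρ] : Integrable (cutoff K r) ρ :=
    .of_bound (lipschitzWith_cutoff K r).continuous.aestronglyMeasurable r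
      (.of_forall (abs_cutoff_le hr0))
  calc r * (μ.real K - ν.real (thickening r K))
      = (∫ x, K.indicator (fun _ => r) x ∂μ)
          - ∫ x, (thickening r K).indicator (fun _ => r) x ∂ν := by
        rw [integral_indicator_const _ hK.measurableSet,
          integral_indicator_const _ isOpen_thickening.measurableSet, smul_eq_mul, smul_eq_mul]
        ring
    _ ≤ (∫ x, cutoff K r x ∂μ) - ∫ x, cutoff K r x ∂ν :=
        sub_le_sub
          (integral_mono ((integrable_const r).indicator hK.measurableSet) (hint μ)
            (indicator_le_cutoff hr0))
          (integral_mono (hint ν) ((integrable_const r).indicator isOpen_thickening.measurableSet)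
            (cutoff_le_indicator_thickening hKne hr0))
    _ ≤ FMdist μ ν :=
        le_FMdist μ ν (fun x => (abs_cutoff_le hr0 x).trans hr1) (lipschitzWith_cutoff K r)

variable {X : Type*} [TopologicalSpace X] [MeasurableSpace X] [OpensMeasurableSpace X]
  [T2Space X] in
lemma MeasureTheory.Measure.MutuallySingular.exists_isCompact_null_measure_compl_lt
    {μ ν : Measure X} [IsFiniteMeasure μ] [μ.InnerRegularCompactLTTop] (h : μ ⟂ₘ ν)
    {η : ENNReal} (hη : η ≠ 0) : ∃ K, IsCompact K ∧ ν K = 0 ∧ μ Kᶜ < η := by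
  obtain ⟨s, hs, hμs, hνs⟩ := h
  obtain ⟨K, hKs, hK, hlt⟩ := hs.compl.exists_isCompact_sdiff_lt (measure_ne_top μ _) hη
  refine ⟨K, hK, measure_mono_null hKs hνs, ?_⟩
  calc μ Kᶜ ≤ μ (s ∪ sᶜ \ K) := measure_mono fun x hx => (em (x ∈ s)).imp id (⟨·, hx⟩)
    _ ≤ μ s + μ (sᶜ \ K) := measure_union_le _ _
    _ < η := by rwa [hμs, zero_add]

variable {X : Type*} [MetricSpace X] [ProperSpace X] [MeasurableSpace X] [OpensMeasurableSpace X] in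
lemma IsCompact.exists_measure_thickening_lt {μ : Measure X} [IsFiniteMeasureOnCompacts μ]
    {K : Set X} (hK : IsCompact K) {c : ENNReal} (hc : μ K < c) :
    ∃ r ∈ Ioc 0 1, μ (thickening r K) < c := by
  have h := tendsto_measure_thickening_of_isClosed
    ⟨1, one_pos, hK.isBounded.thickening.measure_lt_top.ne⟩ hK.isClosed (μ := μ)
  obtain ⟨r, hr, hr'⟩ := ((h.eventually_lt_const hc).and (Ioc_mem_nhdsGT one_pos)).exists
  exact ⟨r, hr', hr⟩

lemma MemM1eps.mono {ε ε' : ℝ} {ν : Measure ℝ} (h : MemM1eps ε ν) (hε : ε ≤ ε') :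
    MemM1eps ε' ν := by
  obtain ⟨A, hA, hA01, hvol, hmass⟩ := h
  exact ⟨A, hA, hA01, hvol.trans_le (ENNReal.ofReal_le_ofReal hε),
    (ENNReal.ofReal_le_ofReal (by linarith)).trans_lt hmass⟩

theorem singular_measure_FM_neighborhood_general (μ : Measure ℝ)
    (hμ : IsProbabilityMeasure μ)
    (hsing : μ ⟂ₘ (volume : Measure ℝ)) :
    ∀ ε > (0 : ℝ), ∃ δ > (0 : ℝ), ∀ ν : Measure ℝ, IsProbabilityMeasure ν →
      ν (Icc (0 : ℝ) 1)ᶜ = 0 → FMdist μ ν < δ → MemM1eps ε ν := by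
  intro ε hε
  -- `ε ≤ 1` keeps `1 - ε / 2` nonnegative, where `ENNReal.ofReal` is faithful.
  wlog hε1 : ε ≤ 1 generalizing ε
  · obtain ⟨δ, hδ, h⟩ := this 1 one_pos le_rfl
    exact ⟨δ, hδ, fun ν hν hν01 hd => (h ν hν hν01 hd).mono (not_le.1 hε1).le⟩
  obtain ⟨K, hK, hKnull, hμKc⟩ := hsing.exists_isCompact_null_measure_compl_lt
    (ENNReal.ofReal_pos.2 (by positivity : 0 < ε / 4)).ne'
  obtain ⟨r, ⟨hr0, hr1⟩, hvol⟩ := hK.exists_measure_thickening_lt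
    (hKnull.trans_lt (ENNReal.ofReal_pos.2 hε))
  refine ⟨r * (ε / 4), by positivity, fun ν hν hν01 hd => ?_⟩
  have hμK : 1 - ε / 4 < μ.real K := by
    have := ENNReal.toReal_lt_of_lt_ofReal hμKc
    rw [← measureReal_def, measureReal_compl hK.isClosed.measurableSet, probReal_univ] at this
    linarith
  have hνT : 1 - ε / 2 < ν.real (thickening r K) := by
    have := (mul_sub_measureReal_thickening_le_FMdist μ ν hK.isClosed hr0.le hr1).trans_lt hd
    linarith [lt_of_mul_lt_mul_left this hr0.le]
  refine ⟨thickening r K ∩ Icc 0 1, isOpen_thickening.measurableSet.inter measurableSet_Icc,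
    inter_subset_right, (measure_mono inter_subset_left).trans_lt hvol, ?_⟩
  rwa [measure_inter_conull hν01,
    ENNReal.ofReal_lt_iff_lt_toReal (by linarith) (measure_ne_top _ _)]

/-- If a Borel probability measure `μ` on `[0,1]` is singular with
respect to Lebesgue measure, then every probability measure on `[0,1]`
sufficiently close to `μ` in the Fortet–Mourier norm lies in `M₁^ε`. -/
theorem singular_measure_FM_neighborhood (μ : Measure ℝ)
    (hμ : IsProbabilityMeasure μ) (hsupp : μ (Icc (0 : ℝ) 1)ᶜ = 0)
    (hsing : μ ⟂ₘ (volume : Measure ℝ)) :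
    ∀ ε > (0 : ℝ), ∃ δ > (0 : ℝ), ∀ ν : Measure ℝ, IsProbabilityMeasure ν →
      ν (Icc (0 : ℝ) 1)ᶜ = 0 → FMdist μ ν < δ → MemM1eps ε ν :=
  singular_measure_FM_neighborhood_general μ hμ hsing
end
end

section
/- Let (Γ,p) be an admissible Iterated Function System. Then for every b ∈ (0,1) and every ε > 0 there exists a finite word (i_1,…,i_n) ∈ {1,…,k}^n such that g_{i_n} ∘ g_{i_{n−1}} ∘ ⋯ ∘ g_{i_1}(b) < ε. -/
open MeasureTheory Set Filter Topology

noncomputable section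

/-- For an admissible IFS, every point `b ∈ (0,1)` can be moved
arbitrarily close to `0` by a suitable finite composition of the maps. -/
theorem orbit_approaches_zero (β : ℝ) (hβ : 0 < β) (k : ℕ)
    (g : Fin k → ℝ → ℝ) (p : Fin k → ℝ) (hadm : Admissible β g p) :
    ∀ b ∈ Ioo (0 : ℝ) 1, ∀ ε > (0 : ℝ),
      ∃ w : List (Fin k), w ≠ [] ∧ wordComp g w b < ε := by
  intro b hb ε hε
  -- g i maps Ioo 0 1 into itself
  have hmap : ∀ i : Fin k, ∀ y ∈ Ioo (0 : ℝ) 1, g i y ∈ Ioo (0 : ℝ) 1 := by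
    intro i y hy
    have hy' : y ∈ Icc (0 : ℝ) 1 := Ioo_subset_Icc_self hy
    have h0 : (0 : ℝ) ∈ Icc (0 : ℝ) 1 := by constructor <;> norm_num
    have h1 : (1 : ℝ) ∈ Icc (0 : ℝ) 1 := by constructor <;> norm_num
    have hmem : g i y ∈ Icc (0 : ℝ) 1 := (hadm.cplus i).mapsTo hy'
    have hne0 : g i y ≠ 0 := by
      intro h
      have := (hadm.homeo i).2.1 hy' h0 (by rw [h, (hadm.cplus i).map_zero])
      exact (ne_of_gt hy.1) this
    have hne1 : g i y ≠ 1 := by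
      intro h
      have := (hadm.homeo i).2.1 hy' h1 (by rw [h, (hadm.cplus i).map_one])
      exact (ne_of_lt hy.2) this
    exact ⟨lt_of_le_of_ne hmem.1 (Ne.symm hne0), lt_of_le_of_ne hmem.2 hne1⟩
  -- the orbit of b
  set O : Set ℝ := {x | ∃ w : List (Fin k), wordComp g w b = x} with hO
  have hOsub : O ⊆ Ioo (0 : ℝ) 1 := by
    rintro x ⟨w, rfl⟩
    induction w with
    | nil => exact hb
    | cons i w ih => exact hmap i _ ih
  have hbO : b ∈ O := ⟨[], rfl⟩
  have hne : O.Nonempty := ⟨b, hbO⟩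
  have hbdd : BddBelow O := ⟨0, fun x hx => (hOsub hx).1.le⟩
  set c := sInf O with hc
  have hc0 : 0 ≤ c := le_csInf hne fun x hx => (hOsub hx).1.le
  have hcb : c ≤ b := csInf_le hbdd hbO
  have hc1 : c < 1 := lt_of_le_of_lt hcb hb.2
  -- key: there is an orbit point below ε
  have hkey : ∃ x ∈ O, x < ε := by
    by_contra h
    push_neg at h
    have hcε : ε ≤ c := le_csInf hne h
    have hcI : c ∈ Ioo (0 : ℝ) 1 := ⟨lt_of_lt_of_le hε hcε, hc1⟩
    obtain ⟨i, hi⟩ := hadm.below c hcI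
    have hct : ContinuousAt (g i) c := by
      have hnb : Icc (0 : ℝ) 1 ∈ 𝓝 c :=
        Icc_mem_nhds hcI.1 hcI.2
      exact ((hadm.cplus i).contOn c (Ioo_subset_Icc_self hcI)).continuousAt hnb
    have hev : ∀ᶠ y in 𝓝 c, g i y < c :=
      hct.eventually_lt continuousAt_const hi
    rw [Metric.eventually_nhds_iff] at hev
    obtain ⟨δ, hδ, hδ'⟩ := hev
    obtain ⟨x, hxO, hx⟩ := exists_lt_of_csInf_lt hne (by linarith : c < c + δ)
    have hcx : c ≤ x := csInf_le hbdd hxO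
    have : g i x < c := hδ' (by rw [Real.dist_eq, abs_of_nonneg (by linarith)]; linarith)
    obtain ⟨w, hw⟩ := hxO
    have : g i x ∈ O := ⟨i :: w, by simp [wordComp, hw]⟩
    exact absurd (csInf_le hbdd this) (not_le.mpr ‹g i x < c›)
  obtain ⟨x, hxO, hxε⟩ := hkey
  have hxI := hOsub hxO
  obtain ⟨i, hi⟩ := hadm.below x hxI
  obtain ⟨w, hw⟩ := hxO
  exact ⟨i :: w, by simp, by simp [wordComp, hw]; linarith⟩

end
end
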